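/- Let X = [0,1]^d, (u^n)_{n≥0} a (t,d)-sequence in base b ≥ 2, and K : X → P(X) a Markov kernel satisfying Assumptions A1 and A2; assume additionally that F_K, viewed as a function of (x,y) ∈ X², is Lipschitz with Lipschitz constant C_K for the supremum norm. Set K̃ = min_{i∈1:d} inf_{(x,y)∈X²} K_i(y_i | y_{1:i−1}, x) and C̃_K = 0.5 K̃ (1 ∧ (0.25 K̃ / C_K)^d). Then the conclusion of Lemma 1 (on the existence of δ̄_K, k_δ and v_K such that every block {F_K^{-1}(x^n, u^n) : a b^{k_δ} ≤ n < (a+1) b^{k_δ}} with x^n ∈ B_{v_K(δ)}(x̃) contains at least b^t points in B_δ(x')) holds with the explicit choices k_δ = ⌈t + d − d·log(δ C̃_K / 3)/log b⌉, δ̄_K = (3/C̃_K) ∧ 0.5, and v_K(δ) = δ·(1 ∧ (0.25 K̃ / C_K)^d). -/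

import Mathlib

open MeasureTheory ProbabilityTheory Set Filter
open scoped Classical

/-- The closed unit cube `[0,1]^d` in `ℝ^d` (modeled as `Fin d → ℝ` with the sup norm). -/
def cube (d : ℕ) : Set (Fin d → ℝ) := {x | ∀ i, x i ∈ Set.Icc (0:ℝ) 1}

/-- Membership in the `b`-ary box `∏_j [c_j b^{-e_j}, (c_j+1) b^{-e_j})`. -/
def inBaryBox {d : ℕ} (b : ℕ) (e c : Fin d → ℕ) (x : Fin d → ℝ) : Prop :=
  ∀ j, (c j : ℝ) / (b : ℝ) ^ (e j) ≤ x j ∧ x j < ((c j : ℝ) + 1) / (b : ℝ) ^ (e j)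

/-- The block `{u^n : A ≤ n < A + b^m}` is a `(t,m,d)`-net in base `b`: every `b`-ary box of
volume `b^{t-m}` contains exactly `b^t` points of the block. -/
def IsNetBlock {d : ℕ} (b t m : ℕ) (u : ℕ → Fin d → ℝ) (A : ℕ) : Prop :=
  ∀ e c : Fin d → ℕ, (∀ j, c j < b ^ (e j)) → (∑ j, e j) = m - t →
    ((Finset.Ico A (A + b ^ m)).filter (fun n => inBaryBox b e c (u n))).card = b ^ t

/-- `(u^n)_{n≥0}` is a `(t,d)`-sequence in base `b`. -/
def IsTSeq {d : ℕ} (b t : ℕ) (u : ℕ → Fin d → ℝ) : Prop :=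
  (∀ n i, u n i ∈ Set.Ico (0:ℝ) 1) ∧
  ∀ a m : ℕ, t ≤ m → IsNetBlock b t m u (a * b ^ m)

/-- `(v^n)_{n≥0}` is a scalar `(t,1)`-sequence in base `b`. -/
def IsTSeq1 (b t : ℕ) (v : ℕ → ℝ) : Prop :=
  (∀ n, v n ∈ Set.Ico (0:ℝ) 1) ∧
  ∀ a m : ℕ, t ≤ m → ∀ c : ℕ, c < b ^ (m - t) →
    ((Finset.Ico (a * b ^ m) (a * b ^ m + b ^ m)).filter
      (fun n => (c : ℝ) / (b:ℝ) ^ (m - t) ≤ v n ∧ v n < ((c : ℝ) + 1) / (b:ℝ) ^ (m - t))).card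
      = b ^ t

/-- `k_n`: the smallest integer `k` such that `n < b^k`. -/
noncomputable def kOf (b n : ℕ) : ℕ := sInf {k | n < b ^ k}

section Rosenblatt

variable {d : ℕ}

/-- Marginal of the density `κ(·|x)` over the first `i` coordinates: the first `i` coordinates
are fixed to those of `y`, the remaining ones are integrated out over the unit cube. -/
noncomputable def marg (κ : (Fin d → ℝ) → (Fin d → ℝ) → ℝ) (i : ℕ) (x y : Fin d → ℝ) : ℝ :=
  ∫ z in cube d, κ x (fun j => if (j : ℕ) < i then y j else z j)

/-- `K_i(y_i | y_{1:i-1}, x)`: the `i`-th conditional density of the kernel density `κ`. -/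
noncomputable def condDensity (κ : (Fin d → ℝ) → (Fin d → ℝ) → ℝ) (i : Fin d)
    (x y : Fin d → ℝ) : ℝ :=
  marg κ ((i : ℕ) + 1) x y / marg κ (i : ℕ) x y

/-- `F_{K_i}(s | x, y_{1:i-1})`: the `i`-th conditional CDF of the kernel density `κ`. -/
noncomputable def condCDF' (κ : (Fin d → ℝ) → (Fin d → ℝ) → ℝ) (i : Fin d)
    (x y : Fin d → ℝ) (s : ℝ) : ℝ :=
  ∫ r in (0:ℝ)..s, condDensity κ i x (Function.update y i r)

/-- The Rosenblatt transform `F_K(x,·)` of the kernel with density `κ`. -/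
noncomputable def Ros (κ : (Fin d → ℝ) → (Fin d → ℝ) → ℝ) (x y : Fin d → ℝ) : Fin d → ℝ :=
  fun i => condCDF' κ i x y (y i)

/-- Assumption (A1): each conditional CDF is strictly increasing in its main argument. -/
def A1 (κ : (Fin d → ℝ) → (Fin d → ℝ) → ℝ) : Prop :=
  ∀ x ∈ cube d, ∀ y ∈ cube d, ∀ i : Fin d,
    StrictMonoOn (fun s => condCDF' κ i x y s) (Set.Icc (0:ℝ) 1)

/-- Assumption (A2): the density `κ` is continuous on `X²` and bounded below by `Klow > 0`. -/
def A2 (κ : (Fin d → ℝ) → (Fin d → ℝ) → ℝ) (Klow : ℝ) : Prop :=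
  ContinuousOn (fun p : (Fin d → ℝ) × (Fin d → ℝ) => κ p.1 p.2) ((cube d) ×ˢ (cube d)) ∧
  0 < Klow ∧ ∀ x ∈ cube d, ∀ y ∈ cube d, Klow ≤ κ x y

/-- `κ` is a probability density in its second argument, w.r.t. Lebesgue measure on the cube. -/
def IsMarkovDensity (κ : (Fin d → ℝ) → (Fin d → ℝ) → ℝ) : Prop :=
  ∀ x ∈ cube d, (∀ y ∈ cube d, 0 ≤ κ x y) ∧ ∫ y in cube d, κ x y = 1

/-- `G` is the inverse Rosenblatt transform associated with `κ`. -/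
def IsInvRos (κ : (Fin d → ℝ) → (Fin d → ℝ) → ℝ)
    (G : (Fin d → ℝ) → (Fin d → ℝ) → (Fin d → ℝ)) : Prop :=
  ∀ x ∈ cube d, ∀ u : Fin d → ℝ, (∀ i, u i ∈ Set.Icc (0:ℝ) 1) →
    G x u ∈ cube d ∧ Ros κ x (G x u) = u

/-- The sup-norm ball `B_δ(x)` of radius `δ` around `x`, intersected with the cube. -/
def ball' {d : ℕ} (δ : ℝ) (x : Fin d → ℝ) : Set (Fin d → ℝ) :=
  {y ∈ cube d | ‖y - x‖ ≤ δ}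

end Rosenblatt

/-- `K̃ = min_{i} inf_{(x,y) ∈ X²} K_i(y_i | y_{1:i-1}, x)`. -/
noncomputable def Ktilde {d : ℕ} (κ : (Fin d → ℝ) → (Fin d → ℝ) → ℝ) : ℝ :=
  sInf {r | ∃ (i : Fin d) (x y : Fin d → ℝ),
    x ∈ cube d ∧ y ∈ cube d ∧ condDensity κ i x y = r}

/-- `C̃_K = 0.5 K̃ (1 ∧ (0.25 K̃ / C_K)^d)`. -/
noncomputable def Ctilde (d : ℕ) (Kt CK : ℝ) : ℝ :=
  0.5 * Kt * min 1 ((0.25 * Kt / CK) ^ d)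

/-- `k_δ = ⌈t + d - d log(δ C̃_K / 3) / log b⌉`. -/
noncomputable def kExplicit (b t d : ℕ) (Ct δ : ℝ) : ℕ :=
  (⌈(t : ℝ) + d - d * Real.log (δ * Ct / 3) / Real.log b⌉).toNat

/-!
Put `u* = F_K(x̃, x')`. The choice of `k_δ` makes the `b`-ary boxes of the net property have
sides at most `δ C̃_K / 3`, so every block of length `b^{k_δ}` contains at least `b^t` points
`u^n` that are `δ C̃_K / 3`-close to `u*` in every coordinate. For such `n`, the point
`y = F_K^{-1}(x^n, u^n)` is `δ`-close to `x'`, one coordinate at a time: the `i`-th conditional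
CDF has slope at least `K̃`, so `K̃ |y_i - x'_i|` is at most the distance from `u^n_i` to
`F_{K_i}(x'_i | x^n, y_{1:i-1})`, and the Lipschitz bound on `F_K` controls that distance by
`‖x^n - x̃‖` and the errors `|y_j - x'_j|`, `j < i`, already obtained. With
`θ = 1 ∧ K̃ / (4 C_K)` the error in coordinate `i` is at most `δ θ^{d-1-i}`.
-/

section Cube

lemma cube_eq_pi (d : ℕ) : cube d = univ.pi fun _ : Fin d => Icc (0:ℝ) 1 := by
  ext x; simp [cube, Pi.le_def, forall_and]

lemma measurableSet_cube (d : ℕ) : MeasurableSet (cube d) := by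
  rw [cube_eq_pi]; exact MeasurableSet.univ_pi fun _ => measurableSet_Icc

lemma isCompact_cube (d : ℕ) : IsCompact (cube d) := by
  rw [cube_eq_pi]; exact isCompact_univ_pi fun _ => isCompact_Icc

lemma volume_cube (d : ℕ) : volume (cube d) = 1 := by
  rw [cube_eq_pi, volume_pi_pi]; simp [Real.volume_Icc]

lemma update_mem_cube {d : ℕ} {y : Fin d → ℝ} (hy : y ∈ cube d) (i : Fin d) {r : ℝ}
    (hr : r ∈ Icc (0:ℝ) 1) : Function.update y i r ∈ cube d := by
  intro j
  rcases eq_or_ne j i with rfl | h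
  · simpa using hr
  · simpa [Function.update_of_ne h] using hy j

lemma ite_mem_cube {d : ℕ} {y z : Fin d → ℝ} (hy : y ∈ cube d) (hz : z ∈ cube d) (m : ℕ) :
    (fun j : Fin d => if (j : ℕ) < m then y j else z j) ∈ cube d := fun j => by
  dsimp only
  split_ifs
  exacts [hy j, hz j]

lemma insertNth_mem_cube {n : ℕ} {i : Fin (n + 1)} {r : ℝ} {w : Fin n → ℝ}
    (hr : r ∈ Icc (0:ℝ) 1) (hw : w ∈ cube n) : i.insertNth r w ∈ cube (n + 1) := by
  intro l
  rcases eq_or_ne l i with rfl | h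
  · simpa using hr
  · obtain ⟨j, rfl⟩ := Fin.exists_succAbove_eq h
    simpa using hw j

end Cube

section Fubini

variable {n : ℕ}

lemma setIntegral_cube_eq_setIntegral_insertNth (i : Fin (n + 1)) {R : (Fin (n + 1) → ℝ) → ℝ}
    (hR : ContinuousOn R (cube (n + 1))) :
    ∫ z in cube (n + 1), R z = ∫ r in Icc (0:ℝ) 1, ∫ w in cube n, R (i.insertNth r w) := by
  let e := MeasurableEquiv.piFinSuccAbove (fun _ : Fin (n + 1) => ℝ) i
  have hpre : e ⁻¹' (Icc (0:ℝ) 1 ×ˢ cube n) = cube (n + 1) := by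
    ext z
    exact (Fin.forall_iff_succAbove (P := fun j => z j ∈ Icc (0:ℝ) 1) i).symm
  have hint : IntegrableOn (fun p : ℝ × (Fin n → ℝ) => R (i.insertNth p.1 p.2))
      (Icc (0:ℝ) 1 ×ˢ cube n) (volume.prod volume) := by
    refine ContinuousOn.integrableOn_compact (isCompact_Icc.prod (isCompact_cube n)) ?_
    refine hR.comp
      (Continuous.finInsertNth (A := fun _ => ℝ) i continuous_fst continuous_snd).continuousOn ?_
    rintro ⟨r, w⟩ ⟨hr, hw⟩
    exact insertNth_mem_cube hr hw
  have hchange := MeasurePreserving.setIntegral_preimage_emb (f := e)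
    (volume_preserving_piFinSuccAbove _ i) e.measurableEmbedding (fun p => R (e.symm p))
    (Icc 0 1 ×ˢ cube n)
  simp only [MeasurableEquiv.symm_apply_apply, hpre] at hchange
  rw [hchange, Measure.volume_eq_prod]
  exact setIntegral_prod _ hint

lemma intervalIntegral_setIntegral_cube_update {d : ℕ} (i : Fin d) {Q : (Fin d → ℝ) → ℝ}
    (hQ : ContinuousOn Q (cube d)) :
    ∫ r in (0:ℝ)..1, ∫ z in cube d, Q (Function.update z i r) = ∫ z in cube d, Q z := by
  rcases d with _ | n
  · exact i.elim0
  -- `Q (update z i r)` does not see `z i`, so that coordinate integrates out to a factor `1`.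
  have hslice : ∀ r ∈ Icc (0:ℝ) 1, ∫ z in cube (n + 1), Q (Function.update z i r)
      = ∫ w in cube n, Q (i.insertNth r w) := by
    intro r hr
    have hQr : ContinuousOn (fun z => Q (Function.update z i r)) (cube (n + 1)) :=
      hQ.comp (continuous_id.update i continuous_const).continuousOn
        fun z hz => update_mem_cube hz i hr
    simp only [setIntegral_cube_eq_setIntegral_insertNth i hQr, Fin.update_insertNth,
      setIntegral_const, measureReal_def, Real.volume_Icc, sub_zero,
      ENNReal.toReal_ofReal zero_le_one, one_smul]
  rw [intervalIntegral.integral_of_le zero_le_one, ← integral_Icc_eq_integral_Ioc,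
    setIntegral_congr_fun measurableSet_Icc hslice, setIntegral_cube_eq_setIntegral_insertNth i hQ]

end Fubini

section ConditionalCDF

variable {d : ℕ} {κ : (Fin d → ℝ) → (Fin d → ℝ) → ℝ} {Klow : ℝ}

lemma marg_congr {x y y' : Fin d → ℝ} {m : ℕ} (h : ∀ j : Fin d, (j : ℕ) < m → y j = y' j) :
    marg κ m x y = marg κ m x y' := by
  unfold marg
  congr 1 with z
  congr 1 with j
  split_ifs with hj
  exacts [h j hj, rfl]

lemma condCDF'_congr {x y y' : Fin d → ℝ} {i : Fin d} (h : ∀ j < i, y j = y' j) (s : ℝ) :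
    condCDF' κ i x y s = condCDF' κ i x y' s := by
  unfold condCDF' condDensity
  congr 1 with r
  congr 1 <;> refine marg_congr fun j hj => ?_ <;> rcases eq_or_ne j i with rfl | hne
  · simp
  · rw [Function.update_of_ne hne, Function.update_of_ne hne]
    exact h j (by rw [Fin.lt_def]; have := Fin.val_ne_of_ne hne; omega)
  · exact absurd hj (lt_irrefl _)
  · rw [Function.update_of_ne hne, Function.update_of_ne hne]
    exact h j hj

lemma continuousOn_marg_integrand (hA2 : A2 κ Klow) {x y : Fin d → ℝ} (hx : x ∈ cube d)
    (hy : y ∈ cube d) (m : ℕ) :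
    ContinuousOn (fun z => κ x fun j : Fin d => if (j : ℕ) < m then y j else z j) (cube d) := by
  have hite : Continuous fun z : Fin d → ℝ => fun j : Fin d => if (j : ℕ) < m then y j else z j :=
    continuous_pi fun j => by split_ifs; exacts [continuous_const, continuous_apply j]
  refine hA2.1.comp (continuous_const.prodMk hite).continuousOn fun z hz => ?_
  exact ⟨hx, ite_mem_cube hy hz m⟩

lemma le_marg (hA2 : A2 κ Klow) {x y : Fin d → ℝ} (hx : x ∈ cube d) (hy : y ∈ cube d) (m : ℕ) :
    Klow ≤ marg κ m x y := by
  have h := setIntegral_ge_of_const_le (c := Klow) (measurableSet_cube d)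
    (by rw [volume_cube]; exact ENNReal.one_ne_top)
    (fun z hz => hA2.2.2 x hx _ (ite_mem_cube hy hz m))
    ((continuousOn_marg_integrand hA2 hx hy m).integrableOn_compact (isCompact_cube d))
  rwa [measureReal_def, volume_cube, ENNReal.toReal_one, one_smul] at h

lemma marg_pos (hA2 : A2 κ Klow) {x y : Fin d → ℝ} (hx : x ∈ cube d) (hy : y ∈ cube d)
    (m : ℕ) : 0 < marg κ m x y :=
  hA2.2.1.trans_le (le_marg hA2 hx hy m)

lemma Ktilde_nonneg (hA2 : A2 κ Klow) : 0 ≤ Ktilde κ := by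
  refine Real.sInf_nonneg ?_
  rintro r ⟨i, x, y, hx, hy, rfl⟩
  exact div_nonneg (marg_pos hA2 hx hy _).le (marg_pos hA2 hx hy _).le

lemma Ktilde_le_condDensity (hKt : 0 < Ktilde κ) {x y : Fin d → ℝ} (hx : x ∈ cube d)
    (hy : y ∈ cube d) (i : Fin d) : Ktilde κ ≤ condDensity κ i x y := by
  by_cases hbdd : BddBelow {r | ∃ (i : Fin d) (x y : Fin d → ℝ),
      x ∈ cube d ∧ y ∈ cube d ∧ condDensity κ i x y = r}
  · exact csInf_le hbdd ⟨i, x, y, hx, hy, rfl⟩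
  · rw [Ktilde, Real.sInf_of_not_bddBelow hbdd] at hKt
    exact absurd hKt (lt_irrefl 0)

lemma pos_of_Ktilde_pos (hKt : 0 < Ktilde κ) : 0 < d := by
  refine Nat.pos_of_ne_zero fun hd => ?_
  subst hd
  simp [Ktilde] at hKt

lemma Ktilde_pos (hA2 : A2 κ Klow) {CK : ℝ} (hCt : 0 < Ctilde d (Ktilde κ) CK) :
    0 < Ktilde κ := by
  refine (Ktilde_nonneg hA2).lt_of_ne fun h => ?_
  rw [Ctilde, ← h, mul_zero, zero_mul] at hCt
  exact lt_irrefl 0 hCt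

lemma condCDF'_zero (i : Fin d) (x w : Fin d → ℝ) : condCDF' κ i x w 0 = 0 :=
  intervalIntegral.integral_same

lemma ite_succ_update (i : Fin d) (w z : Fin d → ℝ) (r : ℝ) :
    (fun j : Fin d => if (j : ℕ) < i + 1 then Function.update w i r j else z j)
      = fun j : Fin d => if (j : ℕ) < i then w j else Function.update z i r j := by
  funext j
  rcases eq_or_ne j i with rfl | hne
  · simp
  · have hval := Fin.val_ne_of_ne hne
    simp only [Function.update_of_ne hne]
    split_ifs <;> first | rfl | omega

/-- Integrating out `y_i` turns the marginal of the first `i + 1` coordinates into that of the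
first `i`. -/
lemma condCDF'_one (hA2 : A2 κ Klow) {x w : Fin d → ℝ} (hx : x ∈ cube d) (hw : w ∈ cube d)
    (i : Fin d) : condCDF' κ i x w 1 = 1 := by
  have hden : ∀ r, marg κ i x (Function.update w i r) = marg κ i x w := fun r =>
    marg_congr fun j hj => Function.update_of_ne (fun h => by subst h; omega) _ _
  have hnum : ∫ r in (0:ℝ)..1, marg κ (i + 1) x (Function.update w i r) = marg κ i x w := by
    simp only [marg, ite_succ_update]
    exact intervalIntegral_setIntegral_cube_update i (continuousOn_marg_integrand hA2 hx hw i)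
  simp only [condCDF', condDensity, hden, intervalIntegral.integral_div, hnum]
  exact div_self (marg_pos hA2 hx hw i).ne'

end ConditionalCDF

section InverseRosenblatt

variable {d : ℕ} {κ : (Fin d → ℝ) → (Fin d → ℝ) → ℝ}

/-- A non-integrable density would make `condCDF'` the junk value `0`, contradicting (A1). -/
lemma intervalIntegrable_condDensity_update (hA1 : A1 κ) {x w : Fin d → ℝ} (hx : x ∈ cube d)
    (hw : w ∈ cube d) (i : Fin d) {s : ℝ} (hs : s ∈ Icc (0:ℝ) 1) :
    IntervalIntegrable (fun r => condDensity κ i x (Function.update w i r)) volume 0 s := by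
  by_contra hno
  rcases hs.1.eq_or_lt with rfl | hpos
  · exact hno IntervalIntegrable.refl
  · have hmono := hA1 x hx w hw i ⟨le_rfl, zero_le_one⟩ hs hpos
    simp only [condCDF'_zero] at hmono
    rw [condCDF', intervalIntegral.integral_undef hno] at hmono
    exact lt_irrefl 0 hmono

lemma mul_sub_le_condCDF'_sub (hKt : 0 < Ktilde κ) (hA1 : A1 κ) {x w : Fin d → ℝ}
    (hx : x ∈ cube d) (hw : w ∈ cube d) (i : Fin d) {s s' : ℝ} (hs : s ∈ Icc (0:ℝ) 1)
    (hs' : s' ∈ Icc (0:ℝ) 1) (hle : s' ≤ s) :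
    Ktilde κ * (s - s') ≤ condCDF' κ i x w s - condCDF' κ i x w s' := by
  have hint := fun {s} => intervalIntegrable_condDensity_update (s := s) hA1 hx hw i
  rw [condCDF', condCDF', intervalIntegral.integral_interval_sub_left (hint hs) (hint hs')]
  calc Ktilde κ * (s - s') = ∫ _ in s'..s, Ktilde κ := by simp [mul_comm]
    _ ≤ _ := intervalIntegral.integral_mono_on hle intervalIntegrable_const
        ((hint hs').symm.trans (hint hs)) fun r hr =>
          Ktilde_le_condDensity hKt hx (update_mem_cube hw i ⟨hs'.1.trans hr.1, hr.2.trans hs.2⟩) i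

lemma mul_abs_sub_le_abs_condCDF'_sub (hKt : 0 < Ktilde κ) (hA1 : A1 κ) {x w : Fin d → ℝ}
    (hx : x ∈ cube d) (hw : w ∈ cube d) (i : Fin d) {s s' : ℝ} (hs : s ∈ Icc (0:ℝ) 1)
    (hs' : s' ∈ Icc (0:ℝ) 1) :
    Ktilde κ * |s - s'| ≤ |condCDF' κ i x w s - condCDF' κ i x w s'| := by
  rcases le_total s' s with h | h
  · rw [abs_of_nonneg (sub_nonneg.2 h)]
    exact (mul_sub_le_condCDF'_sub hKt hA1 hx hw i hs hs' h).trans (le_abs_self _)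
  · rw [abs_sub_comm s, abs_sub_comm (condCDF' κ i x w s), abs_of_nonneg (sub_nonneg.2 h)]
    exact (mul_sub_le_condCDF'_sub hKt hA1 hx hw i hs' hs h).trans (le_abs_self _)

lemma Ros_mem_cube {Klow : ℝ} (hA1 : A1 κ) (hA2 : A2 κ Klow) {x y : Fin d → ℝ}
    (hx : x ∈ cube d) (hy : y ∈ cube d) : Ros κ x y ∈ cube d := fun i => by
  have hmono := (hA1 x hx y hy i).monotoneOn
  exact ⟨condCDF'_zero (κ := κ) i x y ▸ hmono ⟨le_rfl, zero_le_one⟩ (hy i) (hy i).1,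
    condCDF'_one hA2 hx hy i ▸ hmono (hy i) ⟨zero_le_one, le_rfl⟩ (hy i).2⟩

lemma norm_piecewise_Iio_sub_le {y x' : Fin d → ℝ} {i : Fin d} {r : ℝ} (hr : 0 ≤ r)
    (h : ∀ j < i, |y j - x' j| ≤ r) : ‖(Iio i).piecewise y x' - x'‖ ≤ r :=
  (pi_norm_le_iff_of_nonneg hr).2 fun j => by
    by_cases hj : j < i <;> simp [hj, h j, hr]

variable {CK : ℝ}
  (hLip : ∀ x ∈ cube d, ∀ y ∈ cube d, ∀ x' ∈ cube d, ∀ y' ∈ cube d,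
    ‖Ros κ x y - Ros κ x' y'‖ ≤ CK * max ‖x - x'‖ ‖y - y'‖)
include hLip

/-- `F_{K_i}(· | x, y_{1:i-1})` has slope at least `K̃`; the Lipschitz bound is applied between
`(x̃, x')` and `(x, (y_{1:i-1}, x'_{i:d}))`, whose `i`-th components are `F_{K_i}` at `x'_i`. -/
lemma Ktilde_mul_abs_sub_le (hKt : 0 < Ktilde κ) (hA1 : A1 κ) {xt x' x y : Fin d → ℝ}
    (hxt : xt ∈ cube d) (hx' : x' ∈ cube d) (hx : x ∈ cube d) (hy : y ∈ cube d) (i : Fin d) :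
    Ktilde κ * |y i - x' i| ≤
      |Ros κ x y i - Ros κ xt x' i| + CK * max ‖xt - x‖ ‖x' - (Iio i).piecewise y x'‖ := by
  set w := (Iio i).piecewise y x'
  have hw : w ∈ cube d := fun j => by by_cases hj : j < i <;> simp [w, hj, hy j, hx' j]
  have hyw : Ros κ x y i = condCDF' κ i x w (y i) :=
    condCDF'_congr (fun j hj => by simp [w, hj]) _
  have hx'w : Ros κ x w i = condCDF' κ i x w (x' i) := by simp [Ros, w]
  have hLip_i : |Ros κ xt x' i - Ros κ x w i| ≤ CK * max ‖xt - x‖ ‖x' - w‖ := by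
    simpa using (norm_le_pi_norm (Ros κ xt x' - Ros κ x w) i).trans (hLip xt hxt x' hx' x hx w hw)
  calc Ktilde κ * |y i - x' i| ≤ |Ros κ x y i - Ros κ x w i| := by
        rw [hyw, hx'w]; exact mul_abs_sub_le_abs_condCDF'_sub hKt hA1 hx hw i (hy i) (hx' i)
    _ ≤ |Ros κ x y i - Ros κ xt x' i| + |Ros κ xt x' i - Ros κ x w i| := abs_sub_le _ _ _
    _ ≤ _ := by gcongr

theorem norm_sub_le_of_abs_Ros_sub_le (hKt : 0 < Ktilde κ) (hA1 : A1 κ) (hCK : 0 ≤ CK)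
    {θ δ : ℝ} (hθ0 : 0 ≤ θ) (hθ1 : θ ≤ 1) (hθCK : CK * θ ≤ Ktilde κ / 4) (hδ : 0 ≤ δ)
    {xt x' x y : Fin d → ℝ} (hxt : xt ∈ cube d) (hx' : x' ∈ cube d) (hx : x ∈ cube d)
    (hy : y ∈ cube d) (hxxt : ‖x - xt‖ ≤ δ * θ ^ d)
    (hRos : ∀ j, |Ros κ x y j - Ros κ xt x' j| ≤ δ * Ktilde κ * θ ^ d / 6) :
    ‖y - x'‖ ≤ δ := by
  have hθpow : ∀ {m n : ℕ}, m ≤ n → δ * θ ^ n ≤ δ * θ ^ m := fun h =>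
    mul_le_mul_of_nonneg_left (pow_le_pow_of_le_one hθ0 hθ1 h) hδ
  have hcoord : ∀ i : Fin d, |y i - x' i| ≤ δ * θ ^ (d - 1 - i) := by
    intro i
    induction i using WellFoundedLT.induction with
    | _ i IH =>
    have hmax : max ‖xt - x‖ ‖x' - (Iio i).piecewise y x'‖ ≤ δ * θ ^ (d - i) := by
      refine max_le ((norm_sub_rev xt x).trans_le (hxxt.trans (hθpow (Nat.sub_le _ _)))) ?_
      rw [norm_sub_rev]
      refine norm_piecewise_Iio_sub_le (by positivity) fun j hj => (IH j hj).trans (hθpow ?_)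
      rw [Fin.lt_def] at hj
      omega
    have hsplit : θ ^ (d - i) = θ * θ ^ (d - 1 - i) := by
      rw [← pow_succ']; congr 1; omega
    have hd_le := hθpow (m := d - 1 - i) (n := d) (Nat.sub_le _ _ |>.trans (Nat.sub_le _ _))
    have hnonneg : 0 ≤ δ * θ ^ (d - 1 - i) := by positivity
    refine le_of_mul_le_mul_left ?_ hKt
    calc Ktilde κ * |y i - x' i|
        ≤ δ * Ktilde κ * θ ^ d / 6 + CK * (δ * θ ^ (d - i)) :=
          (Ktilde_mul_abs_sub_le hLip hKt hA1 hxt hx' hx hy i).trans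
            (add_le_add (hRos i) (mul_le_mul_of_nonneg_left hmax hCK))
      _ ≤ Ktilde κ * (δ * θ ^ (d - 1 - i)) / 6 + Ktilde κ / 4 * (δ * θ ^ (d - 1 - i)) := by
          rw [hsplit]
          nlinarith [mul_le_mul_of_nonneg_left hd_le hKt.le,
            mul_le_mul_of_nonneg_right hθCK hnonneg]
      _ ≤ Ktilde κ * (δ * θ ^ (d - 1 - i)) := by nlinarith [mul_nonneg hKt.le hnonneg]
  exact (pi_norm_le_iff_of_nonneg hδ).2 fun i =>
    (hcoord i).trans (mul_le_of_le_one_right hδ (pow_le_one₀ hθ0 hθ1))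

end InverseRosenblatt

section Nets

lemma exists_nat_le_mul_le_succ {N : ℕ} (hN : 0 < N) {v : ℝ} (hv : v ∈ Icc (0:ℝ) 1) :
    ∃ c < N, (c : ℝ) ≤ v * N ∧ v * N ≤ c + 1 := by
  have hvN : 0 ≤ v * N := mul_nonneg hv.1 (Nat.cast_nonneg N)
  rcases lt_or_ge (v * N) N with h | h
  · exact ⟨_, (Nat.floor_lt hvN).2 h, Nat.floor_le hvN, (Nat.lt_floor_add_one _).le⟩
  · have hv1 : v = 1 :=
      le_antisymm hv.2 (le_of_mul_le_mul_right (by simpa using h) (by exact_mod_cast hN))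
    refine ⟨N - 1, by omega, ?_, ?_⟩ <;> simp [hv1, Nat.cast_sub hN]

lemma exists_baryInterval_abs_sub_le {b : ℕ} (hb : 0 < b) (e : ℕ) {v : ℝ}
    (hv : v ∈ Icc (0:ℝ) 1) :
    ∃ c < b ^ e, ∀ w : ℝ, (c : ℝ) / (b : ℝ) ^ e ≤ w → w < ((c : ℝ) + 1) / (b : ℝ) ^ e →
      |w - v| ≤ ((b : ℝ) ^ e)⁻¹ := by
  obtain ⟨c, hc, hlo, hhi⟩ := exists_nat_le_mul_le_succ (pow_pos hb e) hv
  refine ⟨c, hc, fun w hw₁ hw₂ => ?_⟩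
  have hP : (0 : ℝ) < (b : ℝ) ^ e := by positivity
  push_cast at hlo hhi
  rw [div_le_iff₀ hP] at hw₁
  rw [lt_div_iff₀ hP] at hw₂
  rw [← one_div, le_div_iff₀ hP, ← abs_of_pos hP, ← abs_mul, sub_mul,
    abs_sub_le_iff]
  constructor <;> linarith

lemma exists_sum_eq_forall_div_le {d : ℕ} (hd : 0 < d) (M : ℕ) :
    ∃ e : Fin d → ℕ, ∑ j, e j = M ∧ ∀ j, M / d ≤ e j := by
  refine ⟨fun j => M / d + if j = ⟨0, hd⟩ then M % d else 0, ?_, fun j => Nat.le_add_right _ _⟩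
  simp [Finset.sum_add_distrib, Nat.div_add_mod]

/-- A box of the net property around `v`, with all side exponents at least `(k - t) / d`. -/
lemma IsTSeq.pow_le_card_filter_abs_sub_le {b t d : ℕ} {u : ℕ → Fin d → ℝ}
    (hu : IsTSeq b t u) (hb : 0 < b) (hd : 0 < d) (a : ℕ) {k : ℕ} (hk : t ≤ k)
    {v : Fin d → ℝ} (hv : v ∈ cube d) :
    b ^ t ≤ ((Finset.Ico (a * b ^ k) (a * b ^ k + b ^ k)).filter
      fun n => ∀ j, |u n j - v j| ≤ ((b : ℝ) ^ ((k - t) / d))⁻¹).card := by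
  obtain ⟨e, he_sum, he⟩ := exists_sum_eq_forall_div_le hd (k - t)
  choose c hc hbox using fun j => exists_baryInterval_abs_sub_le hb (e j) (hv j)
  rw [← hu.2 a k hk e c hc he_sum]
  refine Finset.card_le_card (Finset.monotone_filter_right _ fun n _ hn j => ?_)
  exact (hbox j _ (hn j).1 (hn j).2).trans
    (inv_anti₀ (by positivity) (pow_le_pow_right₀ (by exact_mod_cast hb) (he j)))

end Nets

section Exponent

lemma le_kExplicit (b t d : ℕ) (Ct δ : ℝ) :
    (t : ℝ) + d - d * Real.log (δ * Ct / 3) / Real.log b ≤ kExplicit b t d Ct δ := by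
  unfold kExplicit
  exact (Int.le_ceil _).trans (by exact_mod_cast Int.self_le_toNat _)

lemma le_kExplicit_of_mul_le_three {b t d : ℕ} (hb : 1 < b) {Ct δ : ℝ} (hpos : 0 < δ * Ct)
    (h3 : δ * Ct ≤ 3) : t ≤ kExplicit b t d Ct δ := by
  have hlog : d * Real.log (δ * Ct / 3) / Real.log b ≤ 0 :=
    div_nonpos_of_nonpos_of_nonneg
      (mul_nonpos_of_nonneg_of_nonpos (Nat.cast_nonneg d) (Real.log_nonpos (by positivity)
        (by linarith)))
      (Real.log_nonneg (by exact_mod_cast hb.le))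
  have hk := le_kExplicit b t d Ct δ
  have hd : (0 : ℝ) ≤ d := Nat.cast_nonneg d
  exact_mod_cast (show (t : ℝ) ≤ kExplicit b t d Ct δ by linarith)

lemma inv_pow_sub_div_le {b t d k : ℕ} (hb : 1 < b) (hd : 0 < d) {A : ℝ} (hA : 0 < A)
    (hk : (t : ℝ) + d - d * Real.log A / Real.log b ≤ k) :
    ((b : ℝ) ^ ((k - t) / d))⁻¹ ≤ A := by
  set q := (k - t) / d
  have hlogb : 0 < Real.log b := Real.log_pos (by exact_mod_cast hb)
  have hd' : (0 : ℝ) < d := by exact_mod_cast hd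
  have hsub : (k : ℝ) - t < d * q + d := by
    have hlt : k - t < d * (q + 1) := Nat.lt_mul_div_succ _ hd
    have hle : k ≤ k - t + t := by omega
    have hleR : (k : ℝ) ≤ ((k - t : ℕ) : ℝ) + t := by exact_mod_cast hle
    have hltR : ((k - t : ℕ) : ℝ) < d * (q + 1) := by exact_mod_cast hlt
    linarith
  have hq : -Real.log A < q * Real.log b := by
    have : d * (-Real.log A / Real.log b) < d * q := by
      have : d * (-Real.log A / Real.log b) = -(d * Real.log A / Real.log b) := by ring
      linarith
    rw [← div_lt_iff₀ hlogb]
    exact lt_of_mul_lt_mul_left this hd'.le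
  have hpow : A⁻¹ < (b : ℝ) ^ q := by
    rwa [← Real.log_lt_log_iff (by positivity) (by positivity), Real.log_inv, Real.log_pow]
  exact (inv_le_comm₀ (by positivity) hA).2 hpow.le

end Exponent

lemma min_one_pow {a : ℝ} (ha : 0 ≤ a) (d : ℕ) : min 1 (a ^ d) = min 1 a ^ d := by
  rcases le_total a 1 with h | h
  · rw [min_eq_right h, min_eq_right (pow_le_one₀ ha h)]
  · rw [min_eq_left h, min_eq_left (one_le_pow₀ h), one_pow]

theorem invRos_block_hits_ball_explicit_general
    {d b t : ℕ} (hb : 2 ≤ b)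
    (u : ℕ → Fin d → ℝ) (hu : IsTSeq b t u)
    (κ : (Fin d → ℝ) → (Fin d → ℝ) → ℝ)
    (hA1 : A1 κ) (Klow : ℝ) (hA2 : A2 κ Klow)
    (G : (Fin d → ℝ) → (Fin d → ℝ) → (Fin d → ℝ)) (hG : IsInvRos κ G)
    (CK : ℝ) (hCK : 0 < CK)
    (hLip : ∀ x ∈ cube d, ∀ y ∈ cube d, ∀ x' ∈ cube d, ∀ y' ∈ cube d,
      ‖Ros κ x y - Ros κ x' y'‖ ≤ CK * max ‖x - x'‖ ‖y - y'‖) :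
    ∀ δ ∈ Set.Ioc (0:ℝ) (min (3 / Ctilde d (Ktilde κ) CK) 0.5),
      ∀ xt ∈ cube d, ∀ x' ∈ cube d, ∀ a : ℕ, ∀ xs : ℕ → Fin d → ℝ,
        (∀ n ∈ Finset.Ico (a * b ^ kExplicit b t d (Ctilde d (Ktilde κ) CK) δ)
            (a * b ^ kExplicit b t d (Ctilde d (Ktilde κ) CK) δ
              + b ^ kExplicit b t d (Ctilde d (Ktilde κ) CK) δ),
          xs n ∈ ball' (δ * min 1 ((0.25 * Ktilde κ / CK) ^ d)) xt) →
        b ^ t ≤ ((Finset.Ico (a * b ^ kExplicit b t d (Ctilde d (Ktilde κ) CK) δ)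
            (a * b ^ kExplicit b t d (Ctilde d (Ktilde κ) CK) δ
              + b ^ kExplicit b t d (Ctilde d (Ktilde κ) CK) δ)).filter
          (fun n => G (xs n) (u n) ∈ ball' δ x')).card := by
  intro δ ⟨hδ, hδle⟩ xt hxt x' hx' a xs hxs
  set Kt := Ktilde κ
  set θ := min 1 (0.25 * Kt / CK)
  have hδCt : δ ≤ 3 / Ctilde d Kt CK := hδle.trans (min_le_left _ _)
  have hCt : 0 < Ctilde d Kt CK := (div_pos_iff_of_pos_left three_pos).1 (hδ.trans_le hδCt)
  have hKt : 0 < Kt := Ktilde_pos hA2 hCt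
  have hθ0 : 0 ≤ θ := le_min zero_le_one (by positivity)
  have hθCK : CK * θ ≤ Kt / 4 := calc
    CK * θ ≤ CK * (0.25 * Kt / CK) := mul_le_mul_of_nonneg_left (min_le_right _ _) hCK.le
    _ = Kt / 4 := by field_simp; norm_num
  have hθd : min 1 ((0.25 * Kt / CK) ^ d) = θ ^ d := min_one_pow (by positivity) d
  have hd : 0 < d := pos_of_Ktilde_pos hKt
  rw [le_div_iff₀ hCt] at hδCt
  have htk : t ≤ kExplicit b t d (Ctilde d Kt CK) δ :=
    le_kExplicit_of_mul_le_three (by omega) (by positivity) hδCt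
  refine (hu.pow_le_card_filter_abs_sub_le (by omega) hd a htk
    (Ros_mem_cube hA1 hA2 hxt hx')).trans (Finset.card_le_card fun n => ?_)
  simp only [Finset.mem_filter]
  rintro ⟨hn, hnear⟩
  obtain ⟨hx, hxxt⟩ := hxs n hn
  obtain ⟨hy, hRos⟩ := hG (xs n) hx (u n) fun i => Ico_subset_Icc_self (hu.1 n i)
  refine ⟨hn, hy, norm_sub_le_of_abs_Ros_sub_le hLip hKt hA1 hCK.le hθ0 (min_le_left _ _) hθCK
    hδ.le hxt hx' hx hy (hθd ▸ hxxt) fun j => ?_⟩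
  rw [hRos]
  refine (hnear j).trans ((inv_pow_sub_div_le (by omega) hd
    (by positivity) (le_kExplicit _ _ _ _ _)).trans (le_of_eq ?_))
  rw [Ctilde, hθd]
  ring

/-- **Lemma 2.** If moreover `F_K` is Lipschitz on `X²` with constant `C_K` (sup norm), then the
conclusion of Lemma 1 holds with the explicit choices `k_δ = ⌈t + d - d log(δ C̃_K/3)/log b⌉`,
`δ̄_K = (3/C̃_K) ∧ 0.5` and `v_K(δ) = δ (1 ∧ (0.25 K̃/C_K)^d)`. -/
theorem invRos_block_hits_ball_explicit
    {d b t : ℕ} (hd : 0 < d) (hb : 2 ≤ b)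
    (u : ℕ → Fin d → ℝ) (hu : IsTSeq b t u)
    (κ : (Fin d → ℝ) → (Fin d → ℝ) → ℝ) (hκ : IsMarkovDensity κ)
    (hA1 : A1 κ) (Klow : ℝ) (hA2 : A2 κ Klow)
    (G : (Fin d → ℝ) → (Fin d → ℝ) → (Fin d → ℝ)) (hG : IsInvRos κ G)
    (CK : ℝ) (hCK : 0 < CK)
    (hLip : ∀ x ∈ cube d, ∀ y ∈ cube d, ∀ x' ∈ cube d, ∀ y' ∈ cube d,
      ‖Ros κ x y - Ros κ x' y'‖ ≤ CK * max ‖x - x'‖ ‖y - y'‖) :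
    ∀ δ ∈ Set.Ioc (0:ℝ) (min (3 / Ctilde d (Ktilde κ) CK) 0.5),
      ∀ xt ∈ cube d, ∀ x' ∈ cube d, ∀ a : ℕ, ∀ xs : ℕ → Fin d → ℝ,
        (∀ n ∈ Finset.Ico (a * b ^ kExplicit b t d (Ctilde d (Ktilde κ) CK) δ)
            (a * b ^ kExplicit b t d (Ctilde d (Ktilde κ) CK) δ
              + b ^ kExplicit b t d (Ctilde d (Ktilde κ) CK) δ),
          xs n ∈ ball' (δ * min 1 ((0.25 * Ktilde κ / CK) ^ d)) xt) →
        b ^ t ≤ ((Finset.Ico (a * b ^ kExplicit b t d (Ctilde d (Ktilde κ) CK) δ)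
            (a * b ^ kExplicit b t d (Ctilde d (Ktilde κ) CK) δ
              + b ^ kExplicit b t d (Ctilde d (Ktilde κ) CK) δ)).filter
          (fun n => G (xs n) (u n) ∈ ball' δ x')).card :=
  invRos_block_hits_ball_explicit_general hb u hu κ hA1 Klow hA2 G hG CK hCK hLip
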